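/- Let p be a prime, q = p^r with r ≥ 1, and let (R, m_R) be a local commutative ring with residue field k = R/m_R of characteristic p such that pR ≠ 0 and m_R^q = 0. Let n = 3q and A₀ = k[x₁, ..., xₙ]/(x₁^q, ..., xₙ^q, f₀), where f₀ = x₁x₂⋯x_q + x_{q+1}x_{q+2}⋯x_{2q} + x_{2q+1}x_{2q+2}⋯x_{3q}. Then A₀ is not liftable to the canonical projection R → k. -/

import Mathlib

/-!
Suppose `A` is a flat lift. Lift the variables to `y (c, a) ∈ A` and put `M c = ∏ a, y (c, a)`.
Since `m_R ^ q = 0` and the `y ^ q` and `M 0 + M 1 + M 2` lie in `m_R A`, all of `M c ^ q` and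
`(M 0 + M 1 + M 2) ^ q` vanish. Expanding with `(x + y) ^ q = x ^ q + y ^ q + p * D x y`
(`D = frobeniusDefect p q`) shows that `D (M 0) (M 1) + D (M 0 + M 1) (M 2)` is `p`-torsion.
By flatness the `p`-torsion of `A` lies in `m_R A` (the annihilator of `p ≠ 0` lies in `m_R`),
so this defect vanishes in `A₀`.

It does not: keeping only the monomials whose exponents are constant on the three blocks of
variables sends the ideal of `A₀` into `(u ^ q, v ^ q, w ^ q, u + v + w) ⊆ k[u, v, w]`, and after
substituting `w = -(u + v)` the defect becomes `D u v` modulo `(u ^ q, v ^ q)`. Its coefficient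
at `u ^ p ^ (r - 1) * v ^ (q - p ^ (r - 1))` is `(q.choose p ^ (r - 1)) / p`, which is prime to `p`.
-/

open scoped TensorProduct

universe u v w

/-- A `k`-algebra `A₀` is liftable to a surjection `π : R → k` if there is a flat
`R`-algebra `A` together with a `k`-algebra isomorphism `k ⊗_R A ≅ A₀`. -/
def IsLiftable {R : Type u} {k : Type v} [CommRing R] [CommRing k] (π : R →+* k)
    (A₀ : Type w) [CommRing A₀] [Algebra k A₀] : Prop :=
  ∃ (A : Type (max u v w)) (_ : CommRing A) (_ : Algebra R A),
    Module.Flat R A ∧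
    (letI : Algebra R k := π.toAlgebra
     Nonempty ((k ⊗[R] A) ≃ₐ[k] A₀))

open MvPolynomial Finset IsLocalRing

section FrobeniusDefect
variable {A B : Type*}

def frobeniusDefect [CommSemiring A] (p q : ℕ) (x y : A) : A :=
  ∑ i ∈ Ioo 0 q, x ^ i * y ^ (q - i) * ((q.choose i / p : ℕ) : A)

theorem map_frobeniusDefect [CommSemiring A] [CommSemiring B] {F : Type*} [FunLike F A B]
    [RingHomClass F A B] (f : F) (p q : ℕ) (x y : A) :
    f (frobeniusDefect p q x y) = frobeniusDefect p q (f x) (f y) := by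
  simp [frobeniusDefect]

theorem add_pow_prime_pow_eq_frobeniusDefect [CommSemiring A] {p : ℕ} (hp : p.Prime) (r : ℕ)
    (x y : A) :
    (x + y) ^ p ^ r = x ^ p ^ r + y ^ p ^ r + p * frobeniusDefect p (p ^ r) x y :=
  (Commute.all x y).add_pow_prime_pow_eq' hp r

theorem natCast_mul_frobeniusDefect_eq_zero [CommRing A] {p r : ℕ} (hp : p.Prime) {x y z : A}
    (hx : x ^ p ^ r = 0) (hy : y ^ p ^ r = 0) (hz : z ^ p ^ r = 0)
    (hxyz : (x + y + z) ^ p ^ r = 0) :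
    (p : A) * (frobeniusDefect p (p ^ r) x y + frobeniusDefect p (p ^ r) (x + y) z) = 0 := by
  rw [add_pow_prime_pow_eq_frobeniusDefect hp, add_pow_prime_pow_eq_frobeniusDefect hp,
    hx, hy, hz] at hxyz
  linear_combination hxyz

theorem frobeniusDefect_neg_right_mem_span [CommRing A] (p q : ℕ) (x : A) :
    frobeniusDefect p q x (-x) ∈ Ideal.span {x ^ q} := by
  refine Ideal.sum_mem _ fun i hi => ?_
  rw [Ideal.mem_span_singleton']
  exact ⟨(-1) ^ (q - i) * ((q.choose i / p : ℕ) : A), by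
    rw [neg_pow, ← pow_mul_pow_sub x (mem_Ioo.1 hi).2.le]; ring⟩

end FrobeniusDefect

namespace Finsupp
variable {ι κ : Type*} [Finite ι] [Finite κ]

noncomputable def compFst : (ι →₀ ℕ) →+ (ι × κ →₀ ℕ) where
  toFun d := equivFunOnFinite.symm (d ∘ Prod.fst)
  map_zero' := by ext; simp
  map_add' _ _ := by ext; simp

@[simp] theorem compFst_apply (d : ι →₀ ℕ) (s : ι × κ) : compFst d s = d s.1 := rfl

theorem compFst_tsub (d e : ι →₀ ℕ) :
    compFst (κ := κ) (d - e) = compFst d - compFst e := by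
  ext; simp

variable [Nonempty κ]

theorem compFst_le_compFst_iff {d e : ι →₀ ℕ} :
    compFst (κ := κ) d ≤ compFst e ↔ d ≤ e :=
  ⟨fun h i => by simpa using h (i, Classical.arbitrary κ), fun h s => h s.1⟩

theorem compFst_injective : Function.Injective (compFst (ι := ι) (κ := κ)) :=
  fun _ _ h => le_antisymm (compFst_le_compFst_iff.1 h.le) (compFst_le_compFst_iff.1 h.ge)

end Finsupp

namespace MvPolynomial
open Finsupp

theorem mem_span_range_X_pow_iff {R σ : Type*} [CommSemiring R] {n : ℕ} {P : MvPolynomial σ R} :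
    P ∈ Ideal.span (Set.range fun i => X i ^ n) ↔ ∀ d ∈ P.support, ∃ i, n ≤ d i := by
  have : (Set.range fun i => (X i ^ n : MvPolynomial σ R)) =
      (fun d => monomial d 1) '' Set.range fun i => Finsupp.single i n := by
    rw [← Set.range_comp]; simp [Function.comp_def, X_pow_eq_monomial]
  simp [this, mem_ideal_span_monomial_image, Finsupp.single_le_iff]

variable {R : Type*} [CommSemiring R] {ι κ : Type*} [Fintype ι] [Fintype κ]

variable (R κ) in
noncomputable def fibreProd : MvPolynomial ι R →ₐ[R] MvPolynomial (ι × κ) R :=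
  aeval fun i => ∏ a : κ, X (i, a)

omit [Fintype ι] in
theorem fibreProd_X (i : ι) : fibreProd R κ (X i) = ∏ a : κ, X (i, a) := aeval_X _ _

theorem fibreProd_monomial (d : ι →₀ ℕ) (r : R) :
    fibreProd R κ (monomial d r) = monomial (compFst d) r := by
  rw [fibreProd, aeval_monomial, monomial_eq, algebraMap_eq, Finsupp.prod_pow, Finsupp.prod_pow,
    Fintype.prod_prod_type]
  simp [Finset.prod_pow]

variable [Nonempty κ]

variable (R ι κ) in
/-- Keeps the monomials whose exponent is constant along each fibre `{i} × κ`. -/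
noncomputable def fibreProdRetraction : MvPolynomial (ι × κ) R →ₗ[R] MvPolynomial ι R :=
  (AddMonoidAlgebra.coeffLinearEquiv R).symm.toLinearMap ∘ₗ
    Finsupp.lcomapDomain compFst compFst_injective ∘ₗ
    (AddMonoidAlgebra.coeffLinearEquiv R).toLinearMap

theorem coeff_fibreProdRetraction (P : MvPolynomial (ι × κ) R) (d : ι →₀ ℕ) :
    coeff d (fibreProdRetraction R ι κ P) = coeff (compFst d) P := rfl

theorem fibreProdRetraction_one : fibreProdRetraction R ι κ 1 = 1 := by
  classical
  ext d
  simp [coeff_fibreProdRetraction, coeff_one, eq_comm (a := (0 : _ →₀ ℕ)),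
    map_eq_zero_iff _ compFst_injective]

theorem fibreProdRetraction_mul_fibreProd (g : MvPolynomial (ι × κ) R) (P : MvPolynomial ι R) :
    fibreProdRetraction R ι κ (g * fibreProd R κ P) = fibreProdRetraction R ι κ g * P := by
  classical
  induction P using MvPolynomial.induction_on' with
  | monomial d r =>
    ext e
    simp only [fibreProd_monomial, coeff_fibreProdRetraction, coeff_mul_monomial',
      compFst_le_compFst_iff, ← compFst_tsub]
  | add P Q hP hQ => rw [map_add, mul_add, map_add, hP, hQ, mul_add]

theorem fibreProdRetraction_fibreProd (P : MvPolynomial ι R) :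
    fibreProdRetraction R ι κ (fibreProd R κ P) = P := by
  simpa [fibreProdRetraction_one] using fibreProdRetraction_mul_fibreProd (κ := κ) 1 P

theorem fibreProdRetraction_mul_X_pow_mem (n : ℕ) (g : MvPolynomial (ι × κ) R) (s : ι × κ) :
    fibreProdRetraction R ι κ (g * X s ^ n) ∈ Ideal.span (Set.range fun i => X i ^ n) := by
  classical
  refine mem_span_range_X_pow_iff.2 fun d hd => ⟨s.1, ?_⟩
  rw [mem_support_iff, coeff_fibreProdRetraction, X_pow_eq_monomial, coeff_mul_monomial'] at hd
  have hle : Finsupp.single s n ≤ compFst d := by_contra fun h => hd (if_neg h)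
  simpa using Finsupp.single_le_iff.1 hle

theorem fibreProdRetraction_mem_span {n : ℕ} {f : MvPolynomial ι R}
    {P : MvPolynomial (ι × κ) R}
    (hP : P ∈ Ideal.span (Set.range (fun s => X s ^ n) ∪ {fibreProd R κ f})) :
    fibreProdRetraction R ι κ P ∈ Ideal.span (Set.range (fun i => X i ^ n) ∪ {f}) := by
  suffices ∀ g, fibreProdRetraction R ι κ (g * P) ∈
      Ideal.span (Set.range (fun i => X i ^ n) ∪ {f}) by
    simpa using this 1
  induction hP using Submodule.span_induction with
  | mem x hx =>
    rcases hx with ⟨s, rfl⟩ | rfl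
    · exact fun g =>
        Ideal.span_mono Set.subset_union_left (fibreProdRetraction_mul_X_pow_mem n g s)
    · intro g
      rw [fibreProdRetraction_mul_fibreProd]
      exact Ideal.mul_mem_left _ _ (Ideal.subset_span (Or.inr rfl))
  | zero => simp
  | add x y _ _ hx hy => intro g; rw [mul_add, map_add]; exact add_mem (hx g) (hy g)
  | smul a x _ hx => intro g; rw [smul_eq_mul, ← mul_assoc]; exact hx (g * a)

end MvPolynomial

theorem Nat.Prime.not_dvd_choose_pow_pred_div {p r : ℕ} (hp : p.Prime) (hr : 1 ≤ r) :
    ¬ p ∣ (p ^ r).choose (p ^ (r - 1)) / p := by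
  intro hdvd
  have hk0 : p ^ (r - 1) ≠ 0 := pow_ne_zero _ hp.ne_zero
  have hval : emultiplicity p ((p ^ r).choose (p ^ (r - 1))) = 1 := by
    rw [hp.emultiplicity_choose_prime_pow (Nat.pow_le_pow_right hp.pos (Nat.sub_le r 1)) hk0,
      multiplicity_pow_self_of_prime hp.prime, Nat.sub_sub_self hr, Nat.cast_one]
  have hsq : p ^ 2 ∣ (p ^ r).choose (p ^ (r - 1)) := by
    rw [pow_two, ← Nat.div_mul_cancel (hp.dvd_choose_pow hk0
      (Nat.pow_lt_pow_right hp.one_lt (by omega)).ne)]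
    exact mul_dvd_mul_right hdvd p
  have := pow_dvd_iff_le_emultiplicity.1 hsq
  rw [hval] at this
  exact absurd this (by norm_num)

namespace MvPolynomial

section CharP
variable {k : Type*} [CommRing k] {p : ℕ} [Fact p.Prime] [CharP k p] {r : ℕ}

variable (r) in
theorem X_zero_add_X_one_pow_mem_span :
    (X 0 + X 1 : MvPolynomial (Fin 2) k) ^ p ^ r ∈
      Ideal.span (Set.range fun i => X i ^ p ^ r) := by
  rw [add_pow_char_pow]
  exact add_mem (Ideal.subset_span ⟨0, rfl⟩) (Ideal.subset_span ⟨1, rfl⟩)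

variable (r) in
theorem span_X_pow_sum_X_le_comap :
    Ideal.span (Set.range (fun c : Fin 3 => (X c : MvPolynomial (Fin 3) k) ^ p ^ r) ∪
        {∑ c, X c}) ≤
      (Ideal.span (Set.range fun i : Fin 2 => (X i : MvPolynomial (Fin 2) k) ^ p ^ r)).comap
        (aeval ![X 0, X 1, -(X 0 + X 1)]) := by
  rw [Ideal.span_le]
  rintro _ (⟨c, rfl⟩ | rfl) <;>
    simp only [SetLike.mem_coe, Ideal.mem_comap, map_pow, map_sum, aeval_X]
  · fin_cases c
    · exact Ideal.subset_span ⟨0, rfl⟩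
    · exact Ideal.subset_span ⟨1, rfl⟩
    · show (-(X 0 + X 1) : MvPolynomial (Fin 2) k) ^ p ^ r ∈ _
      rw [neg_pow]
      exact Ideal.mul_mem_left _ _ (X_zero_add_X_one_pow_mem_span r)
  · simp [Fin.sum_univ_three]

theorem frobeniusDefect_X_not_mem_span (hr : 1 ≤ r) :
    frobeniusDefect p (p ^ r) (X 0 : MvPolynomial (Fin 2) k) (X 1) ∉
      Ideal.span (Set.range fun i => X i ^ p ^ r) := by
  classical
  have hp : p.Prime := Fact.out
  set q := p ^ r
  set i₀ := p ^ (r - 1)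
  have hi₀pos : 0 < i₀ := pow_pos hp.pos _
  have hi₀lt : i₀ < q := Nat.pow_lt_pow_right hp.one_lt (by omega)
  have hi₀ : i₀ ∈ Ioo 0 q := mem_Ioo.2 ⟨hi₀pos, hi₀lt⟩
  set d₀ : Fin 2 →₀ ℕ := Finsupp.single 0 i₀ + Finsupp.single 1 (q - i₀)
  have hterm : ∀ i, (X 0 : MvPolynomial (Fin 2) k) ^ i * X 1 ^ (q - i)
        * ((q.choose i / p : ℕ) : MvPolynomial (Fin 2) k)
      = monomial (Finsupp.single 0 i + Finsupp.single 1 (q - i)) ((q.choose i / p : ℕ) : k) := by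
    intro i
    rw [X_pow_eq_monomial, X_pow_eq_monomial, monomial_mul, one_mul, ← map_natCast C, mul_comm,
      C_mul_monomial, mul_one]
  have hcoeff : coeff d₀ (frobeniusDefect p q (X 0 : MvPolynomial (Fin 2) k) (X 1))
      = ((q.choose i₀ / p : ℕ) : k) := by
    rw [frobeniusDefect, coeff_sum, sum_eq_single_of_mem i₀ hi₀]
    · rw [hterm, coeff_monomial, if_pos rfl]
    · intro i _ hi
      rw [hterm, coeff_monomial, if_neg]
      intro h
      simpa [d₀, hi] using DFunLike.congr_fun h 0
  intro hmem
  have hd₀ : d₀ ∈ (frobeniusDefect p q (X 0 : MvPolynomial (Fin 2) k) (X 1)).support := by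
    rw [mem_support_iff, hcoeff, Ne, CharP.cast_eq_zero_iff k p]
    exact hp.not_dvd_choose_pow_pred_div hr
  obtain ⟨i, hi⟩ := mem_span_range_X_pow_iff.1 hmem d₀ hd₀
  fin_cases i <;> simp [d₀] at hi <;> omega

theorem frobeniusDefect_prod_X_not_mem_span (hr : 1 ≤ r) :
    frobeniusDefect p (p ^ r) (∏ a, X (0, a)) (∏ a, X (1, a)) +
        frobeniusDefect p (p ^ r) (∏ a, X (0, a) + ∏ a, X (1, a)) (∏ a, X (2, a)) ∉
      Ideal.span (Set.range (fun s : Fin 3 × Fin (p ^ r) => (X s : MvPolynomial _ k) ^ p ^ r) ∪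
        {∑ c : Fin 3, ∏ a : Fin (p ^ r), X (c, a)}) := by
  set D : MvPolynomial (Fin 3) k :=
    frobeniusDefect p (p ^ r) (X 0) (X 1) + frobeniusDefect p (p ^ r) (X 0 + X 1) (X 2)
  have hD : fibreProd k (Fin (p ^ r)) D =
      frobeniusDefect p (p ^ r) (∏ a, X (0, a)) (∏ a, X (1, a)) +
        frobeniusDefect p (p ^ r) (∏ a, X (0, a) + ∏ a, X (1, a)) (∏ a, X (2, a)) := by
    simp [D, map_frobeniusDefect, fibreProd_X]
  have hsum : fibreProd k (Fin (p ^ r)) (∑ c : Fin 3, X c) =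
      ∑ c : Fin 3, ∏ a : Fin (p ^ r), X (c, a) := by
    simp [fibreProd_X]
  rw [← hD, ← hsum]
  intro h
  have h₃ := fibreProdRetraction_mem_span h
  rw [fibreProdRetraction_fibreProd] at h₃
  have h₂ := span_X_pow_sum_X_le_comap r h₃
  simp only [Ideal.mem_comap, D, map_add, map_frobeniusDefect, aeval_X] at h₂
  refine frobeniusDefect_X_not_mem_span (k := k) (p := p) hr ?_
  have hneg := (Ideal.span_singleton_le_iff_mem _).2 (X_zero_add_X_one_pow_mem_span (k := k) r)
    (frobeniusDefect_neg_right_mem_span p (p ^ r) (X 0 + X 1))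
  simpa using sub_mem h₂ hneg

end CharP

end MvPolynomial

theorem Module.Flat.mem_map_maximalIdeal_of_smul_eq_zero {R A : Type*} [CommRing R]
    [IsLocalRing R] [CommRing A] [Algebra R A] [Module.Flat R A] {x : R} (hx : x ≠ 0) {z : A}
    (hz : x • z = 0) : z ∈ (maximalIdeal R).map (algebraMap R A) := by
  obtain ⟨n, a, y, hzy, ha⟩ := Module.Flat.isTrivialRelation_of_sum_smul_eq_zero
    (f := fun _ : Unit => x) (x := fun _ => z) (by simpa using hz)
  rw [show z = _ from hzy ()]
  refine Ideal.sum_mem _ fun j _ => ?_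
  rw [Algebra.smul_def]
  refine Ideal.mul_mem_right _ _
    (Ideal.mem_map_of_mem _ ((mem_maximalIdeal _).2 fun hu => hx ?_))
  simpa using hu.mul_left_eq_zero.1 (by simpa using ha j)

noncomputable def tensorEquivQuotientMap {R k A : Type*} [CommRing R] [CommRing k] [CommRing A]
    [Algebra R A] (π : R →+* k) (hπ : Function.Surjective π) :
    letI : Algebra R k := π.toAlgebra
    k ⊗[R] A ≃+* A ⧸ (RingHom.ker π).map (algebraMap R A) :=
  letI : Algebra R k := π.toAlgebra
  ((Algebra.TensorProduct.congr
      (Ideal.quotientKerAlgEquivOfSurjective (f := Algebra.ofId R k) hπ).symm AlgEquiv.refl).trans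
    (Algebra.TensorProduct.comm R _ A)).toRingEquiv.trans
    (Algebra.TensorProduct.quotIdealMapEquivTensorQuot A (RingHom.ker π)).symm.toRingEquiv

theorem IsLiftable.exists_flat_surjective_ker_eq {R : Type u} {k : Type v} [CommRing R]
    [CommRing k] {π : R →+* k} (hπ : Function.Surjective π) {A₀ : Type w} [CommRing A₀]
    [Algebra k A₀]
    (h : IsLiftable π A₀) :
    ∃ (A : Type (max u v w)) (_ : CommRing A) (_ : Algebra R A), Module.Flat R A ∧
      ∃ ρ : A →+* A₀, Function.Surjective ρ ∧
        RingHom.ker ρ = (RingHom.ker π).map (algebraMap R A) := by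
  obtain ⟨A, _, _, hflat, ⟨e⟩⟩ := h
  let φ := (tensorEquivQuotientMap (A := A) π hπ).symm.trans e.toRingEquiv
  refine ⟨A, _, _, hflat, φ.toRingHom.comp (Ideal.Quotient.mk _),
    φ.surjective.comp Ideal.Quotient.mk_surjective, ?_⟩
  rw [RingHom.ker_comp_of_injective _ φ.injective, Ideal.mk_ker]

theorem frobeniusDefect_prod_eq_zero_of_flat_reduction {R A B : Type*} [CommRing R]
    [IsLocalRing R] [CommRing A] [Algebra R A] [Module.Flat R A] [CommRing B] {p r : ℕ}
    (hp : p.Prime)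
    (hpR : (p : R) ≠ 0) (hm : maximalIdeal R ^ p ^ r = ⊥) (ρ : A →+* B)
    (hρ : Function.Surjective ρ) (hker : RingHom.ker ρ = (maximalIdeal R).map (algebraMap R A))
    (x : Fin 3 → Fin (p ^ r) → B) (hx : ∀ c a, x c a ^ p ^ r = 0)
    (hsum : ∑ c, ∏ a, x c a = 0) :
    frobeniusDefect p (p ^ r) (∏ a, x 0 a) (∏ a, x 1 a) +
      frobeniusDefect p (p ^ r) (∏ a, x 0 a + ∏ a, x 1 a) (∏ a, x 2 a) = 0 := by
  have hJ : RingHom.ker ρ ^ p ^ r = ⊥ := by rw [hker, ← Ideal.map_pow, hm, Ideal.map_bot]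
  choose y hy using fun c a => hρ (x c a)
  set M : Fin 3 → A := fun c => ∏ a, y c a
  have hM : ∀ c, M c ^ p ^ r = 0 := fun c => by
    have hmem := Ideal.prod_mem_prod (s := univ) (I := fun _ => RingHom.ker ρ)
      (x := fun a => y c a ^ p ^ r) fun a _ => by rw [RingHom.mem_ker, map_pow, hy, hx]
    rwa [prod_const, card_univ, Fintype.card_fin, hJ, Ideal.mem_bot, prod_pow] at hmem
  have hMsum : (M 0 + M 1 + M 2) ^ p ^ r = 0 := by
    rw [← Ideal.mem_bot, ← hJ]
    refine Ideal.pow_mem_pow ?_ _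
    rw [RingHom.mem_ker]
    simpa [M, map_prod, hy, Fin.sum_univ_three] using hsum
  have htors := natCast_mul_frobeniusDefect_eq_zero hp (hM 0) (hM 1) (hM 2) hMsum
  have hmem := Module.Flat.mem_map_maximalIdeal_of_smul_eq_zero hpR
    (z := frobeniusDefect p (p ^ r) (M 0) (M 1) + frobeniusDefect p (p ^ r) (M 0 + M 1) (M 2))
    (by rwa [Algebra.smul_def, map_natCast])
  rw [← hker, RingHom.mem_ker] at hmem
  simpa [M, map_frobeniusDefect, map_prod, hy] using hmem

/-- **Langer, Proposition 4.6.** Let `p` be a prime, `q = p^r` with `r ≥ 1`, and let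
`(R, m_R)` be a local ring with `pR ≠ 0`, residue field `k = R/m_R` of characteristic `p`,
and `m_R^q = 0`. Let `n = 3q` (variables indexed by `Fin 3 × Fin q`) and
`A₀ = k[x₁, ..., xₙ]/(x₁^q, ..., xₙ^q, f₀)` where
`f₀ = x₁⋯x_q + x_{q+1}⋯x_{2q} + x_{2q+1}⋯x_{3q}`. Then `A₀` is not liftable to the
canonical projection `R → k`. -/
theorem frobenius_neighbourhood_not_liftable (p : ℕ) (hp : p.Prime) (r : ℕ) (hr : 1 ≤ r)
    {R : Type u} [CommRing R] [IsLocalRing R]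
    {k : Type u} [Field k] [CharP k p]
    (π : R →+* k) (hπ : Function.Surjective π)
    (hker : RingHom.ker π = IsLocalRing.maximalIdeal R)
    (hpR : (p : R) ≠ 0)
    (hm : IsLocalRing.maximalIdeal R ^ (p ^ r) = ⊥)
    (f₀ : MvPolynomial (Fin 3 × Fin (p ^ r)) k)
    (hf₀ : f₀ = ∑ c : Fin 3, ∏ a : Fin (p ^ r), MvPolynomial.X (c, a))
    (K : Ideal (MvPolynomial (Fin 3 × Fin (p ^ r)) k))
    (hK : K = Ideal.span ((Set.range fun s => MvPolynomial.X s ^ (p ^ r)) ∪ {f₀})) :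
    ¬ IsLiftable π (MvPolynomial (Fin 3 × Fin (p ^ r)) k ⧸ K) := by
  have : Fact p.Prime := ⟨hp⟩
  intro hlift
  obtain ⟨A, _, _, _, ρ, hρ, hρker⟩ := hlift.exists_flat_surjective_ker_eq hπ
  rw [hker] at hρker
  apply MvPolynomial.frobeniusDefect_prod_X_not_mem_span (k := k) hr
  rw [← hf₀, ← hK, ← Ideal.Quotient.eq_zero_iff_mem]
  have hx : ∀ c a, Ideal.Quotient.mk K (MvPolynomial.X (c, a)) ^ p ^ r = 0 := fun c a => by
    rw [← map_pow, Ideal.Quotient.eq_zero_iff_mem, hK]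
    exact Ideal.subset_span (Or.inl ⟨(c, a), rfl⟩)
  have hsum : ∑ c, ∏ a, Ideal.Quotient.mk K (MvPolynomial.X (c, a)) = 0 := by
    simp_rw [← map_prod, ← map_sum, ← hf₀, Ideal.Quotient.eq_zero_iff_mem, hK]
    exact Ideal.subset_span (Or.inr rfl)
  simpa [map_frobeniusDefect, map_prod] using
    frobeniusDefect_prod_eq_zero_of_flat_reduction hp hpR hm ρ hρ hρker _ hx hsum
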